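/- Let γ₁, γ₂ ∈ ρ_NED(A) with γ₁ < γ₂ and set F(l) = U_{γ₁}(l) ∩ S_{γ₂}(l) for l ∈ ℤ. Then the following are equivalent: (A) F(l) = {0} for every l ∈ ℤ; (B) [γ₁, γ₂] ⊆ ρ_NED(A); (C) S_{γ₁}(l) = S_{γ₂}(l) and U_{γ₁}(l) = U_{γ₂}(l) for all l; (D) for every γ ∈ [γ₁, γ₂] one has γ ∈ ρ_NED(A) with S_γ(l) = S_{γ₂}(l) and U_γ(l) = U_{γ₂}(l) for all l. -/

import Mathlib

open Matrix

attribute [local instance] Matrix.linftyOpNormedAddCommGroup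

abbrev Mat (N : ℕ) := Matrix (Fin N) (Fin N) ℝ

noncomputable def fundSolNat {N : ℕ} (A : ℤ → GL (Fin N) ℝ) : ℕ → GL (Fin N) ℝ
  | 0 => 1
  | n + 1 => A (n : ℤ) * fundSolNat A n

noncomputable def fundSolNeg {N : ℕ} (A : ℤ → GL (Fin N) ℝ) : ℕ → GL (Fin N) ℝ
  | 0 => (A (-1))⁻¹
  | n + 1 => (A (Int.negSucc (n + 1)))⁻¹ * fundSolNeg A n

noncomputable def fundSol {N : ℕ} (A : ℤ → GL (Fin N) ℝ) : ℤ → GL (Fin N) ℝ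
  | Int.ofNat n => fundSolNat A n
  | Int.negSucc n => fundSolNeg A n

/-- The evolution operator `Φ(k,l)` of `x_{k+1} = A_k x_k`. -/
noncomputable def evol {N : ℕ} (A : ℤ → GL (Fin N) ℝ) (k l : ℤ) : Mat N :=
  ↑(fundSol A k * (fundSol A l)⁻¹)

def IsInvariantProjector {N : ℕ} (A : ℤ → GL (Fin N) ℝ) (P : ℤ → Mat N) : Prop :=
  (∀ k, P k * P k = P k) ∧ ∀ k, P (k + 1) * (A k : Mat N) = (A k : Mat N) * P k

/-- Evolution operator `Φ_γ(k,l) = γ^{-(k-l)} Φ(k,l)` of `x_{k+1} = (1/γ) A_k x_k`. -/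
noncomputable def evolW {N : ℕ} (A : ℤ → GL (Fin N) ℝ) (γ : ℝ) (k l : ℤ) : Mat N :=
  γ ^ (l - k) • evol A k l

def NEDWith {N : ℕ} (A : ℤ → GL (Fin N) ℝ) (γ : ℝ) (P : ℤ → Mat N) (K α ε : ℝ) : Prop :=
  IsInvariantProjector A P ∧ 1 ≤ K ∧ 0 < α ∧ α < 1 ∧ 1 ≤ ε ∧
    (∀ k l : ℤ, l ≤ k → ‖evolW A γ k l * P l‖ ≤ K * α ^ (k - l) * ε ^ l) ∧
    (∀ k l : ℤ, k ≤ l → ‖evolW A γ k l * (1 - P l)‖ ≤ K * (1 / α) ^ (k - l) * ε ^ l)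

def HasNED {N : ℕ} (A : ℤ → GL (Fin N) ℝ) (γ : ℝ) : Prop :=
  ∃ P K α ε, NEDWith A γ P K α ε

def HasStrongNED {N : ℕ} (A : ℤ → GL (Fin N) ℝ) (γ : ℝ) : Prop :=
  ∃ P K α ε, NEDWith A γ P K α ε ∧ α * ε ^ 2 < 1

def HasED {N : ℕ} (A : ℤ → GL (Fin N) ℝ) (γ : ℝ) : Prop :=
  ∃ P K α, NEDWith A γ P K α 1

def SigmaNED {N : ℕ} (A : ℤ → GL (Fin N) ℝ) : Set ℝ := {γ | 0 < γ ∧ ¬ HasStrongNED A γ}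

def rhoNED {N : ℕ} (A : ℤ → GL (Fin N) ℝ) : Set ℝ := {γ | 0 < γ ∧ HasStrongNED A γ}

def SigmaED {N : ℕ} (A : ℤ → GL (Fin N) ℝ) : Set ℝ := {γ | 0 < γ ∧ ¬ HasED A γ}

def stableSet {N : ℕ} (A : ℤ → GL (Fin N) ℝ) (γ ε : ℝ) (l : ℤ) : Set (Fin N → ℝ) :=
  {ξ | ∃ C : ℝ, ∀ k : ℤ, l ≤ k → ‖(evol A k l).mulVec ξ‖ * γ ^ (-k) * ε ^ (-l) ≤ C}

def unstableSet {N : ℕ} (A : ℤ → GL (Fin N) ℝ) (γ ε : ℝ) (l : ℤ) : Set (Fin N → ℝ) :=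
  {ξ | ∃ C : ℝ, ∀ k : ℤ, k ≤ l → ‖(evol A k l).mulVec ξ‖ * γ ^ (-k) * ε ^ (-l) ≤ C}

/-!
For `γ` in the resolvent set, the stable and unstable sets at `γ` are the range and the kernel of
the dichotomy projector. Rescaling turns a dichotomy at `c` with rate `α` into one with the same
projector at every `t ∈ (α c, c / α)`, and two dichotomies at `γ₁ < γ₂` with the same projector
into one at every `γ ∈ [γ₁, γ₂]` (stable estimate from `γ₁`, unstable one from `γ₂`). Hence under
(B) the splitting `γ ↦ (S_γ, U_γ)` is locally constant, so constant on the connected interval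
(B ⇒ C), and equal splittings give equal projectors, whence (D). Finally `S_{γ₁} ⊆ S_{γ₂}` and
`U_{γ₂} ⊆ U_{γ₁}`, so by the modular law `U_{γ₁} ∩ S_{γ₂} = 0` holds iff the splittings agree
(A ⇔ C).
-/

open Topology

attribute [local instance] Matrix.linftyOpNormedSpace

theorem forall_le_imp_iff_forall_nat_add {l : ℤ} {p : ℤ → Prop} :
    (∀ k, l ≤ k → p k) ↔ ∀ n : ℕ, p (l + n) :=
  ⟨fun h n => h _ (Int.le_add_of_nonneg_right n.cast_nonneg), fun h k hk => by
    obtain ⟨n, rfl⟩ := Int.le.dest hk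
    exact h n⟩

theorem forall_le_imp_iff_forall_nat_sub {l : ℤ} {p : ℤ → Prop} :
    (∀ k, k ≤ l → p k) ↔ ∀ n : ℕ, p (l - n) :=
  ⟨fun h n => h _ (Int.sub_le_self _ n.cast_nonneg), fun h k hk => by
    obtain ⟨n, rfl⟩ := Int.le.dest hk
    simpa using h n⟩

theorem exists_forall_mul_le_iff {ι : Type*} {p : ι → Prop} {f : ι → ℝ} {c : ℝ} (hc : 0 < c) :
    (∃ C, ∀ i, p i → f i * c ≤ C) ↔ ∃ C, ∀ i, p i → f i ≤ C :=
  ⟨fun ⟨C, h⟩ => ⟨C / c, fun i hi => (le_div_iff₀ hc).2 (h i hi)⟩,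
    fun ⟨C, h⟩ => ⟨C * c, fun i hi => mul_le_mul_of_nonneg_right (h i hi) hc.le⟩⟩

theorem eq_zero_of_forall_norm_le_mul_pow {E : Type*} [NormedAddCommGroup E] {x : E} {c α : ℝ}
    (hα₀ : 0 ≤ α) (hα₁ : α < 1) (h : ∀ n : ℕ, ‖x‖ ≤ c * α ^ n) : x = 0 :=
  norm_le_zero_iff.1 <| ge_of_tendsto' (by
    simpa using (tendsto_pow_atTop_nhds_zero_of_lt_one hα₀ hα₁).const_mul c) h

theorem eq_of_le_of_codisjoint_of_disjoint {L : Type*} [Lattice L] [BoundedOrder L]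
    [IsModularLattice L] {s₁ s₂ u₁ u₂ : L} (hs : s₁ ≤ s₂) (hu : u₂ ≤ u₁)
    (h₁ : Codisjoint s₁ u₁) (h₂ : Codisjoint s₂ u₂) (hd : Disjoint u₁ s₂) :
    s₁ = s₂ ∧ u₁ = u₂ := by
  constructor
  · calc s₁ = s₁ ⊔ u₁ ⊓ s₂ := by rw [hd.eq_bot, sup_bot_eq]
      _ = (s₁ ⊔ u₁) ⊓ s₂ := (sup_inf_assoc_of_le u₁ hs).symm
      _ = s₂ := by rw [h₁.eq_top, top_inf_eq]
  · calc u₁ = (s₂ ⊔ u₂) ⊓ u₁ := by rw [h₂.eq_top, top_inf_eq]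
      _ = (u₂ ⊔ s₂) ⊓ u₁ := by rw [sup_comm]
      _ = u₂ ⊔ s₂ ⊓ u₁ := sup_inf_assoc_of_le s₂ hu
      _ = u₂ := by rw [hd.symm.eq_bot, sup_bot_eq]

section Evolution

variable {N : ℕ} (A : ℤ → GL (Fin N) ℝ)

theorem fundSol_succ (k : ℤ) : fundSol A (k + 1) = A k * fundSol A k := by
  rcases k with n | _ | n
  · rfl
  · exact (mul_inv_cancel (A (-1))).symm
  · exact (mul_inv_cancel_left (A (Int.negSucc (n + 1))) (fundSolNeg A n)).symm

theorem evol_self (l : ℤ) : evol A l l = 1 := by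
  simp [evol]

theorem evol_mul_evol (k m l : ℤ) : evol A k m * evol A m l = evol A k l := by
  simp only [evol, ← Units.val_mul]
  group

theorem evol_succ (k l : ℤ) : evol A (k + 1) l = (A k : Mat N) * evol A k l := by
  rw [evol, evol, fundSol_succ, mul_assoc, Units.val_mul]

theorem evolW_self (γ : ℝ) (l : ℤ) : evolW A γ l l = 1 := by
  simp [evolW, evol_self]

theorem evolW_mul_evolW {γ : ℝ} (hγ : γ ≠ 0) (k m l : ℤ) :
    evolW A γ k m * evolW A γ m l = evolW A γ k l := by
  rw [evolW, evolW, evolW, smul_mul_smul_comm, evol_mul_evol, ← zpow_add₀ hγ]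
  congr 2
  ring

theorem evolW_add_nat_eq_smul {γ : ℝ} (γ' : ℝ) (hγ : γ ≠ 0) (l : ℤ) (n : ℕ) :
    evolW A γ' (l + n) l = (γ / γ') ^ n • evolW A γ (l + n) l := by
  rw [evolW, evolW, smul_smul, show l - (l + n) = -(n : ℤ) by ring, _root_.zpow_neg,
    _root_.zpow_neg, zpow_natCast, zpow_natCast, div_pow]
  field_simp

theorem evolW_sub_nat_eq_smul {γ : ℝ} (γ' : ℝ) (hγ : γ ≠ 0) (l : ℤ) (n : ℕ) :
    evolW A γ' (l - n) l = (γ' / γ) ^ n • evolW A γ (l - n) l := by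
  rw [evolW, evolW, smul_smul, sub_sub_cancel, zpow_natCast, zpow_natCast, div_pow]
  field_simp

end Evolution

section Projector

variable {N : ℕ} {A : ℤ → GL (Fin N) ℝ} {P : ℤ → Mat N}

theorem IsInvariantProjector.one_sub (hP : IsInvariantProjector A P) :
    IsInvariantProjector A (fun k => 1 - P k) :=
  ⟨fun k => IsIdempotentElem.one_sub (hP.1 k),
    fun k => by simp only [sub_mul, mul_sub, one_mul, mul_one, hP.2 k]⟩

theorem IsInvariantProjector.isIdempotentElem (hP : IsInvariantProjector A P) (l : ℤ) :
    IsIdempotentElem (toLinAlgEquiv' (P l)) :=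
  IsIdempotentElem.map (hP.1 l) _

theorem IsInvariantProjector.mul_evol_of_le (hP : IsInvariantProjector A P) {k l : ℤ}
    (hlk : l ≤ k) : P k * evol A k l = evol A k l * P l := by
  induction k, hlk using Int.leInduction with
  | base => rw [evol_self, one_mul, mul_one]
  | succ k _ ih => rw [evol_succ, ← mul_assoc, hP.2 k, mul_assoc, ih, mul_assoc]

theorem IsInvariantProjector.mul_evol (hP : IsInvariantProjector A P) (k l : ℤ) :
    P k * evol A k l = evol A k l * P l := by
  rcases le_total l k with hlk | hkl
  · exact hP.mul_evol_of_le hlk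
  · calc P k * evol A k l = evol A k l * (evol A l k * P k) * evol A k l := by
          rw [← mul_assoc, evol_mul_evol, evol_self, one_mul]
      _ = evol A k l * (P l * evol A l k) * evol A k l := by rw [hP.mul_evol_of_le hkl]
      _ = evol A k l * P l := by rw [mul_assoc, mul_assoc, evol_mul_evol, evol_self, mul_one]

theorem IsInvariantProjector.eq_evolW_mul_mul_evolW (hP : IsInvariantProjector A P) {γ : ℝ}
    (hγ : γ ≠ 0) (l m : ℤ) : P l = evolW A γ l m * P m * evolW A γ m l := by
  have hcomm : P m * evolW A γ m l = evolW A γ m l * P l := by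
    rw [evolW, mul_smul_comm, smul_mul_assoc, hP.mul_evol]
  rw [mul_assoc, hcomm, ← mul_assoc, evolW_mul_evolW A hγ, evolW_self, one_mul]

end Projector

section Dichotomy

variable {N : ℕ} {A : ℤ → GL (Fin N) ℝ} {P : ℤ → Mat N} {γ K α ε : ℝ}

/-- Since `l` ranges over all of `ℤ`, the weight `ε ^ l` tends to `0` as `l → -∞`; as
`‖P l‖ + ‖1 - P l‖ ≥ ‖1‖ = 1`, a dichotomy can only exist with `ε = 1` (unless `N = 0`). -/
theorem NEDWith.eps_one (h : NEDWith A γ P K α ε) : NEDWith A γ P K α 1 := by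
  obtain ⟨hP, hK, hα₀, hα₁, hε, hs, hu⟩ := h
  have hK₀ : 0 < K := by linarith
  rcases isEmpty_or_nonempty (Fin N) with hN | hN
  · have hzero (M : Mat N) : ‖M‖ = 0 := by rw [Subsingleton.elim M 0, norm_zero]
    refine ⟨hP, hK, hα₀, hα₁, le_rfl, fun k l _ => ?_, fun k l _ => ?_⟩ <;>
      exact (hzero _).trans_le (by positivity)
  obtain rfl : ε = 1 := by
    refine le_antisymm (not_lt.1 fun hε₁ => ?_) hε
    have key (l : ℤ) : 1 ≤ 2 * K * ε ^ l :=
      calc (1 : ℝ) = ‖evolW A γ l l * P l + evolW A γ l l * (1 - P l)‖ := by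
            rw [evolW_self, ← mul_add, add_sub_cancel, one_mul, norm_one]
        _ ≤ K * α ^ (l - l) * ε ^ l + K * (1 / α) ^ (l - l) * ε ^ l :=
            (norm_add_le _ _).trans (add_le_add (hs l l le_rfl) (hu l l le_rfl))
        _ = 2 * K * ε ^ l := by simp only [sub_self, zpow_zero]; ring
    obtain ⟨n, hn⟩ := pow_unbounded_of_one_lt (2 * K) hε₁
    have := key (-n)
    rw [_root_.zpow_neg, zpow_natCast, ← div_eq_mul_inv, one_le_div (by positivity)] at this
    linarith
  exact ⟨hP, hK, hα₀, hα₁, hε, hs, hu⟩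

theorem nedWith_one_iff : NEDWith A γ P K α 1 ↔ IsInvariantProjector A P ∧ 1 ≤ K ∧ 0 < α ∧
    α < 1 ∧ (∀ (l : ℤ) (n : ℕ), ‖evolW A γ (l + n) l * P l‖ ≤ K * α ^ n) ∧
    ∀ (l : ℤ) (n : ℕ), ‖evolW A γ (l - n) l * (1 - P l)‖ ≤ K * α ^ n := by
  have hs : (∀ k l : ℤ, l ≤ k → ‖evolW A γ k l * P l‖ ≤ K * α ^ (k - l) * 1 ^ l) ↔
      ∀ (l : ℤ) (n : ℕ), ‖evolW A γ (l + n) l * P l‖ ≤ K * α ^ n := by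
    rw [forall_comm]
    refine forall_congr' fun l => ?_
    rw [forall_le_imp_iff_forall_nat_add]
    simp
  have hu : (∀ k l : ℤ, k ≤ l → ‖evolW A γ k l * (1 - P l)‖ ≤ K * (1 / α) ^ (k - l) * 1 ^ l) ↔
      ∀ (l : ℤ) (n : ℕ), ‖evolW A γ (l - n) l * (1 - P l)‖ ≤ K * α ^ n := by
    rw [forall_comm]
    refine forall_congr' fun l => ?_
    rw [forall_le_imp_iff_forall_nat_sub]
    simp
  simp only [NEDWith, hs, hu, le_refl, true_and]

end Dichotomy

section InvariantSets

variable {N : ℕ} {A : ℤ → GL (Fin N) ℝ} {P : ℤ → Mat N} {γ K α ε : ℝ} {l : ℤ}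

theorem stableSet_eq_stableSet_one (hε : 0 < ε) (l : ℤ) :
    stableSet A γ ε l = stableSet A γ 1 l := by
  ext ξ
  simp only [stableSet, Set.mem_ofPred_eq, _root_.one_zpow, mul_one]
  exact exists_forall_mul_le_iff (zpow_pos hε _)

theorem unstableSet_eq_unstableSet_one (hε : 0 < ε) (l : ℤ) :
    unstableSet A γ ε l = unstableSet A γ 1 l := by
  ext ξ
  simp only [unstableSet, Set.mem_ofPred_eq, _root_.one_zpow, mul_one]
  exact exists_forall_mul_le_iff (zpow_pos hε _)

theorem norm_evol_mulVec_mul_zpow (hγ : 0 < γ) (k l : ℤ) (ξ : Fin N → ℝ) :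
    ‖evol A k l *ᵥ ξ‖ * γ ^ (-k) * 1 ^ (-l) = ‖evolW A γ k l *ᵥ ξ‖ * γ ^ (-l) := by
  rw [evolW, smul_mulVec, norm_smul, Real.norm_of_nonneg (zpow_nonneg hγ.le _), _root_.one_zpow,
    mul_one, show -k = l - k + -l by ring, zpow_add₀ hγ.ne']
  ring

theorem mem_stableSet_iff (hγ : 0 < γ) {ξ : Fin N → ℝ} :
    ξ ∈ stableSet A γ 1 l ↔ ∃ C, ∀ n : ℕ, ‖evolW A γ (l + n) l *ᵥ ξ‖ ≤ C := by
  simp only [stableSet, Set.mem_ofPred_eq, norm_evol_mulVec_mul_zpow hγ]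
  rw [exists_forall_mul_le_iff (zpow_pos hγ _)]
  simp only [forall_le_imp_iff_forall_nat_add]

theorem mem_unstableSet_iff (hγ : 0 < γ) {ξ : Fin N → ℝ} :
    ξ ∈ unstableSet A γ 1 l ↔ ∃ C, ∀ n : ℕ, ‖evolW A γ (l - n) l *ᵥ ξ‖ ≤ C := by
  simp only [unstableSet, Set.mem_ofPred_eq, norm_evol_mulVec_mul_zpow hγ]
  rw [exists_forall_mul_le_iff (zpow_pos hγ _)]
  simp only [forall_le_imp_iff_forall_nat_sub]

theorem stableSet_subset_stableSet {γ' : ℝ} (hγ : 0 < γ) (hγγ' : γ ≤ γ') (l : ℤ) :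
    stableSet A γ 1 l ⊆ stableSet A γ' 1 l := by
  have hratio : 0 ≤ γ / γ' := div_nonneg hγ.le (hγ.le.trans hγγ')
  intro ξ
  rw [mem_stableSet_iff hγ, mem_stableSet_iff (hγ.trans_le hγγ')]
  rintro ⟨C, hC⟩
  refine ⟨C, fun n => ?_⟩
  calc ‖evolW A γ' (l + n) l *ᵥ ξ‖ = (γ / γ') ^ n * ‖evolW A γ (l + n) l *ᵥ ξ‖ := by
        rw [evolW_add_nat_eq_smul A γ' hγ.ne', smul_mulVec, norm_smul,
          Real.norm_of_nonneg (pow_nonneg hratio n)]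
    _ ≤ ‖evolW A γ (l + n) l *ᵥ ξ‖ :=
        mul_le_of_le_one_left (norm_nonneg _) (pow_le_one₀ hratio
          ((div_le_one (hγ.trans_le hγγ')).2 hγγ'))
    _ ≤ C := hC n

theorem unstableSet_subset_unstableSet {γ' : ℝ} (hγ : 0 < γ) (hγγ' : γ ≤ γ') (l : ℤ) :
    unstableSet A γ' 1 l ⊆ unstableSet A γ 1 l := by
  have hratio : 0 ≤ γ / γ' := div_nonneg hγ.le (hγ.le.trans hγγ')
  intro ξ
  rw [mem_unstableSet_iff hγ, mem_unstableSet_iff (hγ.trans_le hγγ')]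
  rintro ⟨C, hC⟩
  refine ⟨C, fun n => ?_⟩
  calc ‖evolW A γ (l - n) l *ᵥ ξ‖ = (γ / γ') ^ n * ‖evolW A γ' (l - n) l *ᵥ ξ‖ := by
        rw [evolW_sub_nat_eq_smul A γ (hγ.trans_le hγγ').ne', smul_mulVec, norm_smul,
          Real.norm_of_nonneg (pow_nonneg hratio n)]
    _ ≤ ‖evolW A γ' (l - n) l *ᵥ ξ‖ :=
        mul_le_of_le_one_left (norm_nonneg _) (pow_le_one₀ hratio
          ((div_le_one (hγ.trans_le hγγ')).2 hγγ'))
    _ ≤ C := hC n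

theorem NEDWith.stableSet_eq_range (h : NEDWith A γ P K α 1) (hγ : 0 < γ) (l : ℤ) :
    stableSet A γ 1 l = LinearMap.range (toLinAlgEquiv' (P l)) := by
  obtain ⟨hP, hK, hα₀, hα₁, hs, hu⟩ := nedWith_one_iff.1 h
  ext ξ
  rw [mem_stableSet_iff hγ, SetLike.mem_coe,
    LinearMap.IsIdempotentElem.mem_range_iff (hP.isIdempotentElem l), toLinAlgEquiv'_apply]
  constructor
  · rintro ⟨C, hC⟩
    have hC₀ : 0 ≤ C := (norm_nonneg _).trans (hC 0)
    have hξ : (1 - P l) *ᵥ ξ = 0 := eq_zero_of_forall_norm_le_mul_pow hα₀.le hα₁ (c := K * C)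
      fun n => by
        have hun := hu (l + n) n
        rw [add_sub_cancel_right] at hun
        calc ‖(1 - P l) *ᵥ ξ‖
            = ‖(evolW A γ l (l + n) * (1 - P (l + n))) *ᵥ (evolW A γ (l + n) l *ᵥ ξ)‖ := by
              rw [mulVec_mulVec, ← hP.one_sub.eq_evolW_mul_mul_evolW hγ.ne']
          _ ≤ K * α ^ n * C :=
              (linfty_opNorm_mulVec _ _).trans
                (mul_le_mul hun (hC n) (norm_nonneg _) (by positivity))
          _ = K * C * α ^ n := by ring
    rwa [sub_mulVec, one_mulVec, sub_eq_zero, eq_comm] at hξ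
  · intro hξ
    refine ⟨K * ‖ξ‖, fun n => ?_⟩
    calc ‖evolW A γ (l + n) l *ᵥ ξ‖ = ‖(evolW A γ (l + n) l * P l) *ᵥ ξ‖ := by
          rw [← mulVec_mulVec, hξ]
      _ ≤ K * α ^ n * ‖ξ‖ :=
          (linfty_opNorm_mulVec _ _).trans (mul_le_mul_of_nonneg_right (hs l n) (norm_nonneg _))
      _ ≤ K * ‖ξ‖ := by
          gcongr
          exact mul_le_of_le_one_right (by positivity) (pow_le_one₀ hα₀.le hα₁.le)

theorem NEDWith.unstableSet_eq_ker (h : NEDWith A γ P K α 1) (hγ : 0 < γ) (l : ℤ) :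
    unstableSet A γ 1 l = LinearMap.ker (toLinAlgEquiv' (P l)) := by
  obtain ⟨hP, hK, hα₀, hα₁, hs, hu⟩ := nedWith_one_iff.1 h
  ext ξ
  rw [mem_unstableSet_iff hγ, SetLike.mem_coe, LinearMap.mem_ker, toLinAlgEquiv'_apply]
  constructor
  · rintro ⟨C, hC⟩
    have hC₀ : 0 ≤ C := (norm_nonneg _).trans (hC 0)
    refine eq_zero_of_forall_norm_le_mul_pow hα₀.le hα₁ (c := K * C) fun n => ?_
    have hst := hs (l - n) n
    rw [sub_add_cancel] at hst
    calc ‖P l *ᵥ ξ‖ = ‖(evolW A γ l (l - n) * P (l - n)) *ᵥ (evolW A γ (l - n) l *ᵥ ξ)‖ := by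
          rw [mulVec_mulVec, ← hP.eq_evolW_mul_mul_evolW hγ.ne']
      _ ≤ K * α ^ n * C :=
          (linfty_opNorm_mulVec _ _).trans
            (mul_le_mul hst (hC n) (norm_nonneg _) (by positivity))
      _ = K * C * α ^ n := by ring
  · intro hξ
    refine ⟨K * ‖ξ‖, fun n => ?_⟩
    calc ‖evolW A γ (l - n) l *ᵥ ξ‖ = ‖(evolW A γ (l - n) l * (1 - P l)) *ᵥ ξ‖ := by
          rw [← mulVec_mulVec, sub_mulVec, one_mulVec, hξ, sub_zero]
      _ ≤ K * α ^ n * ‖ξ‖ :=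
          (linfty_opNorm_mulVec _ _).trans (mul_le_mul_of_nonneg_right (hu l n) (norm_nonneg _))
      _ ≤ K * ‖ξ‖ := by
          gcongr
          exact mul_le_of_le_one_right (by positivity) (pow_le_one₀ hα₀.le hα₁.le)

end InvariantSets

section Splitting

variable {N : ℕ} {A : ℤ → GL (Fin N) ℝ} {P P₁ P₂ : ℤ → Mat N} {γ γ₁ γ₂ K K₁ K₂ α α₁ α₂ : ℝ}

theorem NEDWith.unstableSet_inter_stableSet (h : NEDWith A γ P K α 1) (hγ : 0 < γ) (l : ℤ) :
    unstableSet A γ 1 l ∩ stableSet A γ 1 l = {0} := by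
  rw [h.unstableSet_eq_ker hγ, h.stableSet_eq_range hγ, ← Submodule.coe_inf, inf_comm,
    (LinearMap.IsIdempotentElem.isCompl (h.1.isIdempotentElem l)).inf_eq_bot, Submodule.bot_coe]

theorem NEDWith.fibers_eq (h₁ : NEDWith A γ₁ P K₁ α₁ 1) (h₂ : NEDWith A γ₂ P K₂ α₂ 1)
    (hγ₁ : 0 < γ₁) (hγ₂ : 0 < γ₂) :
    stableSet A γ₁ 1 = stableSet A γ₂ 1 ∧ unstableSet A γ₁ 1 = unstableSet A γ₂ 1 :=
  ⟨funext fun l => by rw [h₁.stableSet_eq_range hγ₁, h₂.stableSet_eq_range hγ₂],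
    funext fun l => by rw [h₁.unstableSet_eq_ker hγ₁, h₂.unstableSet_eq_ker hγ₂]⟩

theorem NEDWith.projector_eq_of_fibers_eq (h₁ : NEDWith A γ₁ P₁ K₁ α₁ 1)
    (h₂ : NEDWith A γ₂ P₂ K₂ α₂ 1) (hγ₁ : 0 < γ₁) (hγ₂ : 0 < γ₂) {l : ℤ}
    (hS : stableSet A γ₁ 1 l = stableSet A γ₂ 1 l)
    (hU : unstableSet A γ₁ 1 l = unstableSet A γ₂ 1 l) : P₁ l = P₂ l := by
  rw [h₁.stableSet_eq_range hγ₁, h₂.stableSet_eq_range hγ₂, SetLike.coe_set_eq] at hS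
  rw [h₁.unstableSet_eq_ker hγ₁, h₂.unstableSet_eq_ker hγ₂, SetLike.coe_set_eq] at hU
  exact toLinAlgEquiv'.injective <| LinearMap.IsIdempotentElem.ext
    (h₁.1.isIdempotentElem l) (h₂.1.isIdempotentElem l) ⟨hS, hU⟩

theorem NEDWith.fibers_eq_of_inter_eq_zero (h₁ : NEDWith A γ₁ P₁ K₁ α₁ 1)
    (h₂ : NEDWith A γ₂ P₂ K₂ α₂ 1) (hγ₁ : 0 < γ₁) (h12 : γ₁ ≤ γ₂) {l : ℤ}
    (hF : unstableSet A γ₁ 1 l ∩ stableSet A γ₂ 1 l = {0}) :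
    stableSet A γ₁ 1 l = stableSet A γ₂ 1 l ∧ unstableSet A γ₁ 1 l = unstableSet A γ₂ 1 l := by
  have hγ₂ := hγ₁.trans_le h12
  have hs := stableSet_subset_stableSet (A := A) hγ₁ h12 l
  have hu := unstableSet_subset_unstableSet (A := A) hγ₁ h12 l
  simp only [h₁.stableSet_eq_range hγ₁, h₂.stableSet_eq_range hγ₂, h₁.unstableSet_eq_ker hγ₁,
    h₂.unstableSet_eq_ker hγ₂] at hs hu hF ⊢
  rw [← Submodule.coe_inf, ← Submodule.bot_coe (R := ℝ), SetLike.coe_set_eq,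
    ← disjoint_iff] at hF
  simp only [SetLike.coe_subset_coe, SetLike.coe_set_eq] at hs hu ⊢
  exact eq_of_le_of_codisjoint_of_disjoint hs hu
    (LinearMap.IsIdempotentElem.isCompl (h₁.1.isIdempotentElem l)).codisjoint
    (LinearMap.IsIdempotentElem.isCompl (h₂.1.isIdempotentElem l)).codisjoint hF

theorem NEDWith.interpolate {γa γb Ka Kb a b : ℝ} (ha : NEDWith A γa P Ka a 1)
    (hb : NEDWith A γb P Kb b 1) (hγa : 0 < γa) (hγa' : a * γa < γ) (hγb' : b * γ < γb) :
    NEDWith A γ P (max Ka Kb) (max (a * γa / γ) (b * γ / γb)) 1 := by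
  obtain ⟨hP, hKa, ha₀, ha₁, hsa, -⟩ := nedWith_one_iff.1 ha
  obtain ⟨-, -, hb₀, hb₁, -, hub⟩ := nedWith_one_iff.1 hb
  have hγ : 0 < γ := (mul_pos ha₀ hγa).trans hγa'
  have hγb : 0 < γb := (mul_pos hb₀ hγ).trans hγb'
  refine nedWith_one_iff.2 ⟨hP, le_max_of_le_left hKa, lt_max_of_lt_left (by positivity),
    max_lt ((div_lt_one hγ).2 hγa') ((div_lt_one hγb).2 hγb'), fun l n => ?_, fun l n => ?_⟩
  · calc ‖evolW A γ (l + n) l * P l‖ = (γa / γ) ^ n * ‖evolW A γa (l + n) l * P l‖ := by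
          rw [evolW_add_nat_eq_smul A γ hγa.ne', smul_mul_assoc, norm_smul,
            Real.norm_of_nonneg (by positivity)]
      _ ≤ (γa / γ) ^ n * (Ka * a ^ n) := by gcongr; exact hsa l n
      _ = Ka * (a * γa / γ) ^ n := by rw [mul_div_assoc, mul_pow]; ring
      _ ≤ max Ka Kb * max (a * γa / γ) (b * γ / γb) ^ n := by
          gcongr
          · exact le_max_left _ _
          · exact le_max_left _ _
  · calc ‖evolW A γ (l - n) l * (1 - P l)‖
          = (γ / γb) ^ n * ‖evolW A γb (l - n) l * (1 - P l)‖ := by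
          rw [evolW_sub_nat_eq_smul A γ hγb.ne', smul_mul_assoc, norm_smul,
            Real.norm_of_nonneg (by positivity)]
      _ ≤ (γ / γb) ^ n * (Kb * b ^ n) := by gcongr; exact hub l n
      _ = Kb * (b * γ / γb) ^ n := by rw [mul_div_assoc, mul_pow]; ring
      _ ≤ max Ka Kb * max (a * γa / γ) (b * γ / γb) ^ n := by
          gcongr
          · exact le_max_right _ _
          · exact le_max_right _ _

theorem NEDWith.exists_nedWith_of_mem_Icc (h₁ : NEDWith A γ₁ P K₁ α₁ 1)
    (h₂ : NEDWith A γ₂ P K₂ α₂ 1) (hγ₁ : 0 < γ₁) (hγ : γ ∈ Set.Icc γ₁ γ₂) :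
    ∃ K α, NEDWith A γ P K α 1 :=
  ⟨_, _, h₁.interpolate h₂ hγ₁ ((mul_lt_of_lt_one_left hγ₁ h₁.2.2.2.1).trans_le hγ.1)
    ((mul_lt_of_lt_one_left (hγ₁.trans_le hγ.1) h₂.2.2.2.1).trans_le hγ.2)⟩

theorem NEDWith.eventually_fibers_eq (h : NEDWith A γ P K α 1) (hγ : 0 < γ) :
    ∀ᶠ t in 𝓝 γ, stableSet A γ 1 = stableSet A t 1 ∧ unstableSet A γ 1 = unstableSet A t 1 := by
  obtain ⟨-, -, hα₀, hα₁, -⟩ := nedWith_one_iff.1 h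
  have hαγ : α * γ < γ := mul_lt_of_lt_one_left hγ hα₁
  filter_upwards [Ioo_mem_nhds hαγ ((lt_div_iff₀ hα₀).2 (by linarith : γ * α < γ))] with t ht
  have ht₀ : 0 < t := (mul_pos hα₀ hγ).trans ht.1
  have hαt : α * t < γ := by linarith [(lt_div_iff₀ hα₀).1 ht.2]
  exact h.fibers_eq (h.interpolate h hγ ht.1 hαt) hγ ht₀

theorem fibers_eq_of_forall_mem_Icc (hγ₁ : 0 < γ₁) (h12 : γ₁ ≤ γ₂)
    (h : ∀ γ ∈ Set.Icc γ₁ γ₂, ∃ P K α, NEDWith A γ P K α 1) :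
    stableSet A γ₁ 1 = stableSet A γ₂ 1 ∧ unstableSet A γ₁ 1 = unstableSet A γ₂ 1 := by
  refine isPreconnected_Icc.induction₂
    (fun x y => stableSet A x 1 = stableSet A y 1 ∧ unstableSet A x 1 = unstableSet A y 1)
    (fun c hc => ?_) (fun _ _ _ _ _ _ hxy hyz => ⟨hxy.1.trans hyz.1, hxy.2.trans hyz.2⟩)
    (fun _ _ _ _ hxy => ⟨hxy.1.symm, hxy.2.symm⟩) (Set.left_mem_Icc.2 h12)
    (Set.right_mem_Icc.2 h12)
  obtain ⟨P, K, α, hP⟩ := h c hc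
  exact nhdsWithin_le_nhds (hP.eventually_fibers_eq (hγ₁.trans_le hc.1))

end Splitting

theorem resolvent_interval_tfae_general {N : ℕ} (A : ℤ → GL (Fin N) ℝ)
    (γ₁ γ₂ : ℝ) (h0 : 0 < γ₁) (h12 : γ₁ < γ₂)
    (P₁ P₂ : ℤ → Mat N) (K₁ α₁ ε₁ K₂ α₂ ε₂ : ℝ)
    (h1 : NEDWith A γ₁ P₁ K₁ α₁ ε₁)
    (h2 : NEDWith A γ₂ P₂ K₂ α₂ ε₂) :
    List.TFAE [
      -- (A) the intersection bundle is trivial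
      (∀ l : ℤ, unstableSet A γ₁ ε₁ l ∩ stableSet A γ₂ ε₂ l = {0}),
      -- (B) the whole interval is in the resolvent set
      (Set.Icc γ₁ γ₂ ⊆ rhoNED A),
      -- (C) the fibers at γ₁ and γ₂ coincide
      (∀ l : ℤ, stableSet A γ₁ ε₁ l = stableSet A γ₂ ε₂ l ∧
        unstableSet A γ₁ ε₁ l = unstableSet A γ₂ ε₂ l),
      -- (D) every γ in the interval is in the resolvent with the fibers of γ₂
      (∀ γ ∈ Set.Icc γ₁ γ₂, ∃ P K α ε, NEDWith A γ P K α ε ∧ α * ε ^ 2 < 1 ∧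
        ∀ l : ℤ, stableSet A γ ε l = stableSet A γ₂ ε₂ l ∧
          unstableSet A γ ε l = unstableSet A γ₂ ε₂ l)] := by
  have hγ₂ : 0 < γ₂ := h0.trans h12
  have hε₁ : 0 < ε₁ := one_pos.trans_le h1.2.2.2.2.1
  have hε₂ : 0 < ε₂ := one_pos.trans_le h2.2.2.2.2.1
  replace h1 := h1.eps_one
  replace h2 := h2.eps_one
  simp only [stableSet_eq_stableSet_one hε₁, stableSet_eq_stableSet_one hε₂,
    unstableSet_eq_unstableSet_one hε₁, unstableSet_eq_unstableSet_one hε₂]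
  tfae_have 1 → 3 := fun hA l => h1.fibers_eq_of_inter_eq_zero h2 h0 h12.le (hA l)
  tfae_have 3 → 1 := fun hC l => (hC l).1 ▸ h1.unstableSet_inter_stableSet h0 l
  tfae_have 3 → 4 := fun hC γ hγ => by
    obtain rfl : P₂ = P₁ :=
      funext fun l => (h1.projector_eq_of_fibers_eq h2 h0 hγ₂ (hC l).1 (hC l).2).symm
    obtain ⟨K, α, h⟩ := h1.exists_nedWith_of_mem_Icc h2 h0 hγ
    have hfib := h.fibers_eq h2 (h0.trans_le hγ.1) hγ₂
    exact ⟨P₂, K, α, 1, h, by simpa using h.2.2.2.1,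
      fun l => ⟨congrFun hfib.1 l, congrFun hfib.2 l⟩⟩
  tfae_have 4 → 2 := fun hD γ hγ => by
    obtain ⟨P, K, α, ε, h, hstrong, -⟩ := hD γ hγ
    exact ⟨h0.trans_le hγ.1, P, K, α, ε, h, hstrong⟩
  tfae_have 2 → 3 := fun hB l => by
    have hfib := fibers_eq_of_forall_mem_Icc h0 h12.le fun γ hγ => by
      obtain ⟨-, P, K, α, ε, h, -⟩ := hB hγ
      exact ⟨P, K, α, h.eps_one⟩
    exact ⟨congrFun hfib.1 l, congrFun hfib.2 l⟩
  tfae_finish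

/-- (Alternative I of the resolvent lemma.) For `γ₁ < γ₂` in the
resolvent set, with `F(l) = U_{γ₁}(l) ∩ S_{γ₂}(l)`, the statements (A) `F ≡ {0}`,
(B) `[γ₁,γ₂] ⊆ ρ_NED(A)`, (C) the fibers at `γ₁` and `γ₂` agree, and
(D) every `γ ∈ [γ₁,γ₂]` is in the resolvent with the same fibers as `γ₂`,
are pairwise equivalent. -/
theorem resolvent_interval_tfae {N : ℕ} (A : ℤ → GL (Fin N) ℝ)
    (γ₁ γ₂ : ℝ) (h0 : 0 < γ₁) (h12 : γ₁ < γ₂)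
    (P₁ P₂ : ℤ → Mat N) (K₁ α₁ ε₁ K₂ α₂ ε₂ : ℝ)
    (h1 : NEDWith A γ₁ P₁ K₁ α₁ ε₁) (h1s : α₁ * ε₁ ^ 2 < 1)
    (h2 : NEDWith A γ₂ P₂ K₂ α₂ ε₂) (h2s : α₂ * ε₂ ^ 2 < 1) :
    List.TFAE [
      -- (A) the intersection bundle is trivial
      (∀ l : ℤ, unstableSet A γ₁ ε₁ l ∩ stableSet A γ₂ ε₂ l = {0}),
      -- (B) the whole interval is in the resolvent set
      (Set.Icc γ₁ γ₂ ⊆ rhoNED A),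
      -- (C) the fibers at γ₁ and γ₂ coincide
      (∀ l : ℤ, stableSet A γ₁ ε₁ l = stableSet A γ₂ ε₂ l ∧
        unstableSet A γ₁ ε₁ l = unstableSet A γ₂ ε₂ l),
      -- (D) every γ in the interval is in the resolvent with the fibers of γ₂
      (∀ γ ∈ Set.Icc γ₁ γ₂, ∃ P K α ε, NEDWith A γ P K α ε ∧ α * ε ^ 2 < 1 ∧
        ∀ l : ℤ, stableSet A γ ε l = stableSet A γ₂ ε₂ l ∧
          unstableSet A γ ε l = unstableSet A γ₂ ε₂ l)] :=
  resolvent_interval_tfae_general A γ₁ γ₂ h0 h12 P₁ P₂ K₁ α₁ ε₁ K₂ α₂ ε₂ h1 h2
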